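/- arXiv:2407.19272 — 4 statements merged into one kernel-verified Lean document; each statement's English description precedes it below -/
import Mathlib

section
/- Consider the preconditioned Fletcher–Reeves nonlinear CG iteration for a differentiable E : ℝⁿ → ℝ with symmetric positive definite preconditioner M, with nonzero gradients g^(k) = ∇E(f^(k)) at every iterate. Suppose every step length α_k satisfies the strong Wolfe conditions with constants 0 < c₁ < c₂ < 1. Then for all k ≥ 0, −1/(1−c₂) ≤ (g^(k)ᵀ p^(k)) / (g^(k)ᵀ M⁻¹ g^(k)) ≤ (2c₂ − 1)/(1 − c₂). -/
/-!
Write `r k = gₖᵀpₖ / ‖gₖ‖²_{M⁻¹}`. Then `r 0 = -1`, and the Fletcher–Reeves choice of `βₖ`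
makes `r (k+1) = -1 + gₖ₊₁ᵀpₖ / ‖gₖ‖²_{M⁻¹}`, so the strong Wolfe curvature condition gives
`|r (k+1) + 1| ≤ c₂ |r k|`. Since `|r k| ≤ 1 + |r k + 1|`, the bound
`|r k + 1| ≤ c₂ / (1 - c₂)` is invariant, and it is the two-sided bound of the theorem.
-/

open Matrix

theorem abs_add_one_le_of_abs_succ_add_one_le {r : ℕ → ℝ} {c : ℝ} (hc₀ : 0 ≤ c)
    (hc₁ : c < 1) (h₀ : r 0 = -1) (hstep : ∀ k, |r (k + 1) + 1| ≤ c * |r k|) (k : ℕ) :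
    |r k + 1| ≤ c / (1 - c) := by
  have hc : 0 < 1 - c := by linarith
  induction k with
  | zero => simpa [h₀] using div_nonneg hc₀ hc.le
  | succ k ih =>
    have hr : |r k| ≤ 1 + |r k + 1| := by
      simpa using abs_sub_le (r k) (r k + 1) 0
    calc |r (k + 1) + 1| ≤ c * |r k| := hstep k
      _ ≤ c * (1 + c / (1 - c)) := by gcongr; linarith
      _ = c / (1 - c) := by field_simp; ring

section FletcherReeves

variable {ι : Type*} [Fintype ι] {A : Matrix ι ι ℝ} {g g' p : ι → ℝ}

theorem dotProduct_fletcherReeves_div (hq' : g' ⬝ᵥ A *ᵥ g' ≠ 0) :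
    (g' ⬝ᵥ (-(A *ᵥ g') + ((g' ⬝ᵥ A *ᵥ g') / (g ⬝ᵥ A *ᵥ g)) • p)) /
        (g' ⬝ᵥ A *ᵥ g') =
      -1 + (g' ⬝ᵥ p) / (g ⬝ᵥ A *ᵥ g) := by
  rw [dotProduct_add, dotProduct_neg, dotProduct_smul, smul_eq_mul]
  field_simp

theorem abs_dotProduct_fletcherReeves_div_add_one_le {c : ℝ} (hq : 0 < g ⬝ᵥ A *ᵥ g)
    (hq' : g' ⬝ᵥ A *ᵥ g' ≠ 0) (hcurv : |g' ⬝ᵥ p| ≤ c * |g ⬝ᵥ p|) :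
    |(g' ⬝ᵥ (-(A *ᵥ g') + ((g' ⬝ᵥ A *ᵥ g') / (g ⬝ᵥ A *ᵥ g)) • p)) /
        (g' ⬝ᵥ A *ᵥ g') + 1| ≤
      c * |(g ⬝ᵥ p) / (g ⬝ᵥ A *ᵥ g)| := by
  rw [dotProduct_fletcherReeves_div hq', neg_add_cancel_comm, abs_div, abs_div, abs_of_pos hq,
    mul_div_assoc']
  exact div_le_div_of_nonneg_right hcurv hq.le

end FletcherReeves

theorem pcg_descent_ratio_bounds_general
    (n : ℕ)
    (gradE : (Fin n → ℝ) → (Fin n → ℝ))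
    (M : Matrix (Fin n) (Fin n) ℝ) (hM : M.PosDef)
    (f p : ℕ → (Fin n → ℝ)) (α : ℕ → ℝ)
    (c₁ c₂ : ℝ) (hc₁ : 0 < c₁) (hc₁₂ : c₁ < c₂) (hc₂ : c₂ < 1)
    (hgne : ∀ k, gradE (f k) ≠ 0)
    (hp0 : p 0 = -(M⁻¹.mulVec (gradE (f 0))))
    (hf : ∀ k, f (k + 1) = f k + α k • p k)
    (hpk : ∀ k, p (k + 1) =
      -(M⁻¹.mulVec (gradE (f (k + 1)))) +
        ((gradE (f (k + 1)) ⬝ᵥ M⁻¹.mulVec (gradE (f (k + 1)))) /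
          (gradE (f k) ⬝ᵥ M⁻¹.mulVec (gradE (f k)))) • p k)
    (hWolfe2 : ∀ k, |gradE (f k + α k • p k) ⬝ᵥ p k| ≤ c₂ * |gradE (f k) ⬝ᵥ p k|) :
    ∀ k, -(1 / (1 - c₂)) ≤
        (gradE (f k) ⬝ᵥ p k) / (gradE (f k) ⬝ᵥ M⁻¹.mulVec (gradE (f k))) ∧
      (gradE (f k) ⬝ᵥ p k) / (gradE (f k) ⬝ᵥ M⁻¹.mulVec (gradE (f k))) ≤
        (2 * c₂ - 1) / (1 - c₂) := by
  have hq k : 0 < gradE (f k) ⬝ᵥ M⁻¹ *ᵥ gradE (f k) :=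
    hM.inv.dotProduct_mulVec_pos (hgne k)
  let r k := (gradE (f k) ⬝ᵥ p k) / (gradE (f k) ⬝ᵥ M⁻¹ *ᵥ gradE (f k))
  have hr₀ : r 0 = -1 := by simp [r, hp0, (hq 0).ne']
  have hstep k : |r (k + 1) + 1| ≤ c₂ * |r k| := by
    simp only [r, hpk k]
    exact abs_dotProduct_fletcherReeves_div_add_one_le (hq k) (hq (k + 1)).ne'
      (by simpa only [hf k] using hWolfe2 k)
  intro k
  have hc : 1 - c₂ ≠ 0 := by linarith
  have hbound := abs_le.mp
    (abs_add_one_le_of_abs_succ_add_one_le (hc₁.trans hc₁₂).le hc₂ hr₀ hstep k)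
  have hlower : -(1 / (1 - c₂)) = -(c₂ / (1 - c₂)) - 1 := by field_simp; ring
  have hupper : (2 * c₂ - 1) / (1 - c₂) = c₂ / (1 - c₂) - 1 := by field_simp; ring
  exact ⟨by rw [hlower]; linarith [hbound.1], by rw [hupper]; linarith [hbound.2]⟩

/-- Lemma 5.3: in the preconditioned Fletcher–Reeves nonlinear CG iteration,
if every step length satisfies the strong Wolfe conditions with
`0 < c₁ < c₂ < 1`, then `-1/(1-c₂) ≤ (g⁽ᵏ⁾ᵀ p⁽ᵏ⁾)/(g⁽ᵏ⁾ᵀ M⁻¹ g⁽ᵏ⁾) ≤ (2c₂-1)/(1-c₂)`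
for all `k ≥ 0`. -/
theorem pcg_descent_ratio_bounds
    (n : ℕ) (hn : 1 ≤ n)
    (E : (Fin n → ℝ) → ℝ) (gradE : (Fin n → ℝ) → (Fin n → ℝ))
    (hdiff : Differentiable ℝ E)
    (hgrad : ∀ x v, fderiv ℝ E x v = gradE x ⬝ᵥ v)
    (M : Matrix (Fin n) (Fin n) ℝ) (hM : M.PosDef)
    (f p : ℕ → (Fin n → ℝ)) (α : ℕ → ℝ)
    (c₁ c₂ : ℝ) (hc₁ : 0 < c₁) (hc₁₂ : c₁ < c₂) (hc₂ : c₂ < 1)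
    (hgne : ∀ k, gradE (f k) ≠ 0)
    (hα : ∀ k, 0 < α k)
    (hp0 : p 0 = -(M⁻¹.mulVec (gradE (f 0))))
    (hf : ∀ k, f (k + 1) = f k + α k • p k)
    (hpk : ∀ k, p (k + 1) =
      -(M⁻¹.mulVec (gradE (f (k + 1)))) +
        ((gradE (f (k + 1)) ⬝ᵥ M⁻¹.mulVec (gradE (f (k + 1)))) /
          (gradE (f k) ⬝ᵥ M⁻¹.mulVec (gradE (f k)))) • p k)
    (hWolfe1 : ∀ k, E (f k + α k • p k) ≤ E (f k) + c₁ * α k * (gradE (f k) ⬝ᵥ p k))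
    (hWolfe2 : ∀ k, |gradE (f k + α k • p k) ⬝ᵥ p k| ≤ c₂ * |gradE (f k) ⬝ᵥ p k|) :
    ∀ k, -(1 / (1 - c₂)) ≤
        (gradE (f k) ⬝ᵥ p k) / (gradE (f k) ⬝ᵥ M⁻¹.mulVec (gradE (f k))) ∧
      (gradE (f k) ⬝ᵥ p k) / (gradE (f k) ⬝ᵥ M⁻¹.mulVec (gradE (f k))) ≤
        (2 * c₂ - 1) / (1 - c₂) :=
  pcg_descent_ratio_bounds_general n gradE M hM f p α c₁ c₂ hc₁ hc₁₂ hc₂ hgne hp0 hf hpk hWolfe2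
end

section
/- Consider the preconditioned Fletcher–Reeves nonlinear CG iteration for a differentiable E : ℝⁿ → ℝ with symmetric positive definite preconditioner M, with nonzero gradients g^(k) = ∇E(f^(k)) at every iterate. Suppose every step length α_k satisfies the strong Wolfe conditions with constants 0 < c₁ < c₂ < 1/2. Then for all k ≥ 0, the direction p^(k) is a descent direction of E at f^(k), i.e., g^(k)ᵀ p^(k) < 0. -/
/-!
Write `S k = g⁽ᵏ⁾ᵀM⁻¹g⁽ᵏ⁾ > 0` and `d k = g⁽ᵏ⁾ᵀp⁽ᵏ⁾`. Following Al-Baali, one shows by induction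
that `-1/(1-c₂) ≤ d k / S k ≤ (2c₂-1)/(1-c₂)`, whose right end is negative since `c₂ < 1/2`.
Taking the inner product of the Fletcher–Reeves update with `g⁽ᵏ⁺¹⁾` gives
`d (k+1) = -S (k+1) + (S (k+1) / S k) · g⁽ᵏ⁺¹⁾ᵀp⁽ᵏ⁾`, and the strong Wolfe curvature condition
bounds the last inner product by `c₂ |d k|`, which propagates both ends of the bound.
-/

open Matrix

/-- `-1/(1-c) ≤ d/S ≤ (2c-1)/(1-c)`, cleared of denominators. -/
def FRBound (c S d : ℝ) : Prop :=
  -S ≤ (1 - c) * d ∧ (1 - c) * d ≤ -((1 - 2 * c) * S)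

namespace FRBound

variable {c S d : ℝ}

theorem neg (hc : c < 1 / 2) (hS : 0 < S) (h : FRBound c S d) : d < 0 := by
  nlinarith [h.2]

theorem init (hc₀ : 0 ≤ c) (hS : 0 < S) : FRBound c S (-S) :=
  ⟨by nlinarith, by nlinarith⟩

theorem step {S' u : ℝ} (hc₀ : 0 ≤ c) (hc : c < 1 / 2) (hS : 0 < S) (hS' : 0 < S')
    (h : FRBound c S d) (hu : |u| ≤ c * |d|) : FRBound c S' (-S' + S' / S * u) := by
  have hu_le : (1 - c) * |u| ≤ c * S := calc
    (1 - c) * |u| ≤ (1 - c) * (c * |d|) := mul_le_mul_of_nonneg_left hu (by linarith)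
    _ = c * ((1 - c) * -d) := by rw [abs_of_neg (h.neg hc hS)]; ring
    _ ≤ c * S := mul_le_mul_of_nonneg_left (by linarith [h.1]) hc₀
  have hβu : (1 - c) * |S' / S * u| ≤ c * S' := calc
    (1 - c) * |S' / S * u| = S' / S * ((1 - c) * |u|) := by
      rw [abs_mul, abs_of_nonneg (by positivity)]; ring
    _ ≤ S' / S * (c * S) := mul_le_mul_of_nonneg_left hu_le (by positivity)
    _ = c * S' := by field_simp
  have h1c : 0 ≤ 1 - c := by linarith
  constructor <;> nlinarith [mul_le_mul_of_nonneg_left (neg_abs_le (S' / S * u)) h1c,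
    mul_le_mul_of_nonneg_left (le_abs_self (S' / S * u)) h1c]

end FRBound

theorem frBound_of_recurrence {c : ℝ} {S d u : ℕ → ℝ} (hc₀ : 0 ≤ c) (hc : c < 1 / 2)
    (hS : ∀ k, 0 < S k) (hd₀ : d 0 = -S 0)
    (hd : ∀ k, d (k + 1) = -S (k + 1) + S (k + 1) / S k * u k)
    (hu : ∀ k, |u k| ≤ c * |d k|) (k : ℕ) : FRBound c (S k) (d k) := by
  induction k with
  | zero => exact hd₀ ▸ FRBound.init hc₀ (hS 0)
  | succ k ih => exact hd k ▸ ih.step hc₀ hc (hS k) (hS (k + 1)) (hu k)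

theorem pcg_descent_direction_general
    (n : ℕ)
    (gradE : (Fin n → ℝ) → (Fin n → ℝ))
    (M : Matrix (Fin n) (Fin n) ℝ) (hM : M.PosDef)
    (f p : ℕ → (Fin n → ℝ)) (α : ℕ → ℝ)
    (c₁ c₂ : ℝ) (hc₁ : 0 < c₁) (hc₁₂ : c₁ < c₂) (hc₂ : c₂ < 1 / 2)
    (hgne : ∀ k, gradE (f k) ≠ 0)
    (hp0 : p 0 = -(M⁻¹.mulVec (gradE (f 0))))
    (hf : ∀ k, f (k + 1) = f k + α k • p k)
    (hpk : ∀ k, p (k + 1) =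
      -(M⁻¹.mulVec (gradE (f (k + 1)))) +
        ((gradE (f (k + 1)) ⬝ᵥ M⁻¹.mulVec (gradE (f (k + 1)))) /
          (gradE (f k) ⬝ᵥ M⁻¹.mulVec (gradE (f k)))) • p k)
    (hWolfe2 : ∀ k, |gradE (f k + α k • p k) ⬝ᵥ p k| ≤ c₂ * |gradE (f k) ⬝ᵥ p k|) :
    ∀ k, gradE (f k) ⬝ᵥ p k < 0 := by
  intro k
  have hS : ∀ k, 0 < gradE (f k) ⬝ᵥ M⁻¹.mulVec (gradE (f k)) :=
    fun k => hM.inv.dotProduct_mulVec_pos (hgne k)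
  refine FRBound.neg hc₂ (hS k) <| frBound_of_recurrence (d := fun k => gradE (f k) ⬝ᵥ p k)
    (u := fun k => gradE (f (k + 1)) ⬝ᵥ p k) (hc₁.trans hc₁₂).le hc₂ hS ?_ ?_ ?_ k
  · rw [hp0, dotProduct_neg]
  · intro k
    rw [hpk k, dotProduct_add, dotProduct_neg, dotProduct_smul, smul_eq_mul]
  · intro k
    simpa only [hf k] using hWolfe2 k

/-- Corollary 5.4: in the preconditioned Fletcher–Reeves nonlinear CG iteration,
if every step length satisfies the strong Wolfe conditions with
`0 < c₁ < c₂ < 1/2`, then every direction `p⁽ᵏ⁾` is a descent direction,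
i.e. `g⁽ᵏ⁾ᵀ p⁽ᵏ⁾ < 0`. -/
theorem pcg_descent_direction
    (n : ℕ) (hn : 1 ≤ n)
    (E : (Fin n → ℝ) → ℝ) (gradE : (Fin n → ℝ) → (Fin n → ℝ))
    (hdiff : Differentiable ℝ E)
    (hgrad : ∀ x v, fderiv ℝ E x v = gradE x ⬝ᵥ v)
    (M : Matrix (Fin n) (Fin n) ℝ) (hM : M.PosDef)
    (f p : ℕ → (Fin n → ℝ)) (α : ℕ → ℝ)
    (c₁ c₂ : ℝ) (hc₁ : 0 < c₁) (hc₁₂ : c₁ < c₂) (hc₂ : c₂ < 1 / 2)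
    (hgne : ∀ k, gradE (f k) ≠ 0)
    (hα : ∀ k, 0 < α k)
    (hp0 : p 0 = -(M⁻¹.mulVec (gradE (f 0))))
    (hf : ∀ k, f (k + 1) = f k + α k • p k)
    (hpk : ∀ k, p (k + 1) =
      -(M⁻¹.mulVec (gradE (f (k + 1)))) +
        ((gradE (f (k + 1)) ⬝ᵥ M⁻¹.mulVec (gradE (f (k + 1)))) /
          (gradE (f k) ⬝ᵥ M⁻¹.mulVec (gradE (f k)))) • p k)
    (hWolfe1 : ∀ k, E (f k + α k • p k) ≤ E (f k) + c₁ * α k * (gradE (f k) ⬝ᵥ p k))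
    (hWolfe2 : ∀ k, |gradE (f k + α k • p k) ⬝ᵥ p k| ≤ c₂ * |gradE (f k) ⬝ᵥ p k|) :
    ∀ k, gradE (f k) ⬝ᵥ p k < 0 :=
  pcg_descent_direction_general n gradE M hM f p α c₁ c₂ hc₁ hc₁₂ hc₂ hgne hp0 hf hpk hWolfe2
end

section
/- Consider the preconditioned Fletcher–Reeves nonlinear CG iteration for a differentiable E : ℝⁿ → ℝ with symmetric positive definite preconditioner M, with nonzero gradients g^(k) = ∇E(f^(k)) at every iterate. Assume E is bounded below on ℝⁿ, ∇E is Lipschitz continuous on ℝⁿ, and every step length α_k satisfies the strong Wolfe conditions with constants 0 < c₁ < c₂ < 1/2. Then the series Σ_{k=0}^{∞} ‖g^(k)‖⁴_{M⁻¹} / ‖p^(k)‖²_M converges, i.e., Σ_{k=0}^{∞} (g^(k)ᵀM⁻¹g^(k))² / (p^(k)ᵀ M p^(k)) < ∞. -/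
/-!
With `σ = (1 - 2c₂)/(1 - c₂) > 0`, the strong Wolfe curvature condition keeps the Fletcher–Reeves
directions sufficiently descending (Al-Baali): `gₖᵀpₖ ≤ -σ ‖gₖ‖²_{M⁻¹}`. The Armijo condition, a
lower bound on the step length coming from the curvature condition and the Lipschitz gradient, and
`E` bounded below give Zoutendijk's condition `∑ (gₖᵀpₖ)² / ‖pₖ‖² < ∞`. Since `‖p‖²_M ≥ μ ‖p‖²`,
each term of the series is at most `(σ² μ)⁻¹ (gₖᵀpₖ)² / ‖pₖ‖²`.
-/

open Matrix

namespace Matrix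

variable {ι : Type*} [Fintype ι]

lemma dotProduct_le_card_mul_norm_mul_norm (a b : ι → ℝ) :
    a ⬝ᵥ b ≤ Fintype.card ι * (‖a‖ * ‖b‖) := by
  calc a ⬝ᵥ b = ∑ i, a i * b i := rfl
    _ ≤ Finset.univ.card • (‖a‖ * ‖b‖) := by
      refine Finset.sum_le_card_nsmul _ _ _ fun i _ => ?_
      calc a i * b i ≤ ‖a i‖ * ‖b i‖ := by
            rw [Real.norm_eq_abs, Real.norm_eq_abs, ← abs_mul]; exact le_abs_self _
        _ ≤ ‖a‖ * ‖b‖ := by gcongr <;> exact norm_le_pi_norm _ i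
    _ = Fintype.card ι * (‖a‖ * ‖b‖) := by rw [nsmul_eq_mul, Finset.card_univ]

/-- The quadratic form attains a positive minimum on the unit sphere and is homogeneous of degree
two. -/
lemma PosDef.exists_pos_mul_sq_norm_le {M : Matrix ι ι ℝ} (hM : M.PosDef) :
    ∃ μ > 0, ∀ x : ι → ℝ, μ * ‖x‖ ^ 2 ≤ x ⬝ᵥ M *ᵥ x := by
  rcases isEmpty_or_nonempty ι with hι | hι
  · exact ⟨1, one_pos, fun x => by simp [Subsingleton.elim x 0]⟩
  have hcont : Continuous fun x : ι → ℝ => x ⬝ᵥ M *ᵥ x := by fun_prop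
  obtain ⟨z, hz, hmin⟩ := (isCompact_sphere (0 : ι → ℝ) 1).exists_isMinOn
    (NormedSpace.sphere_nonempty.mpr zero_le_one) hcont.continuousOn
  have hz_norm : ‖z‖ = 1 := mem_sphere_zero_iff_norm.mp hz
  have hz_ne : z ≠ 0 := by rintro rfl; simp at hz_norm
  refine ⟨z ⬝ᵥ M *ᵥ z, by simpa using hM.dotProduct_mulVec_pos hz_ne, fun x => ?_⟩
  rcases eq_or_ne x 0 with rfl | hx
  · simp
  have hx_pos : 0 < ‖x‖ := norm_pos_iff.mpr hx
  have hy : ‖x‖⁻¹ • x ∈ Metric.sphere (0 : ι → ℝ) 1 := by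
    simp [norm_smul, hx_pos.ne']
  have hquad : x ⬝ᵥ M *ᵥ x = ‖x‖ ^ 2 * ((‖x‖⁻¹ • x) ⬝ᵥ M *ᵥ (‖x‖⁻¹ • x)) := by
    simp only [mulVec_smul, smul_dotProduct, dotProduct_smul, smul_eq_mul]
    field_simp
  rw [hquad, mul_comm]
  exact mul_le_mul_of_nonneg_left (hmin hy) (sq_nonneg _)

end Matrix

lemma summable_of_le_sub_succ {a e : ℕ → ℝ} {B : ℝ} (ha : ∀ k, 0 ≤ a k)
    (hae : ∀ k, a k ≤ e k - e (k + 1)) (hB : ∀ k, B ≤ e k) : Summable a := by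
  refine summable_of_sum_range_le (c := e 0 - B) ha fun N => ?_
  calc ∑ k ∈ Finset.range N, a k ≤ ∑ k ∈ Finset.range N, (e k - e (k + 1)) :=
        Finset.sum_le_sum fun k _ => hae k
    _ = e 0 - e N := Finset.sum_range_sub' e N
    _ ≤ e 0 - B := by linarith [hB N]

/-- Zoutendijk's condition, reduced to real sequences: `e k = E (f k)`, `D k = ∇E(f k)ᵀ p k`,
`q k = ‖p k‖²`; `hstep` is the lower bound on the step length that the curvature condition and
a Lipschitz gradient give. -/
lemma summable_sq_div_of_armijo {e D α q : ℕ → ℝ} {B c₁ c₂ L : ℝ} (hc₁ : 0 < c₁) (hc₂ : c₂ < 1)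
    (hL : 0 ≤ L) (hB : ∀ k, B ≤ e k) (hD : ∀ k, D k ≤ 0) (hq : ∀ k, 0 < q k)
    (harmijo : ∀ k, e (k + 1) ≤ e k + c₁ * α k * D k)
    (hstep : ∀ k, (1 - c₂) * -D k ≤ L * α k * q k) :
    Summable fun k => D k ^ 2 / q k := by
  have hκ : 0 < c₁ * (1 - c₂) := mul_pos hc₁ (by linarith)
  refine summable_of_le_sub_succ (e := fun k => L / (c₁ * (1 - c₂)) * e k)
    (B := L / (c₁ * (1 - c₂)) * B) (fun k => div_nonneg (sq_nonneg _) (hq k).le) (fun k => ?_)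
    (fun k => by gcongr; exact hB k)
  have hdecrease : c₁ * α k * -D k ≤ e k - e (k + 1) := by linarith [harmijo k]
  have hsq : c₁ * (1 - c₂) * D k ^ 2 ≤ L * (e k - e (k + 1)) * q k :=
    calc c₁ * (1 - c₂) * D k ^ 2 = c₁ * -D k * ((1 - c₂) * -D k) := by ring
      _ ≤ c₁ * -D k * (L * α k * q k) :=
          mul_le_mul_of_nonneg_left (hstep k) (mul_nonneg hc₁.le (neg_nonneg.mpr (hD k)))
      _ = L * (c₁ * α k * -D k) * q k := by ring
      _ ≤ L * (e k - e (k + 1)) * q k :=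
          mul_le_mul_of_nonneg_right (mul_le_mul_of_nonneg_left hdecrease hL) (hq k).le
  rw [← mul_sub, div_mul_eq_mul_div, le_div_iff₀ hκ, div_mul_eq_mul_div, div_le_iff₀ (hq k)]
  linarith

lemma abs_add_one_le_of_abs_succ_add_one_le_s10 {c : ℝ} (hc₀ : 0 ≤ c) (hc₁ : c < 1) {r : ℕ → ℝ}
    (h₀ : r 0 = -1) (hr : ∀ k, |r (k + 1) + 1| ≤ c * |r k|) : ∀ k, |r k + 1| ≤ c / (1 - c)
  | 0 => by rw [h₀, neg_add_cancel, abs_zero]; exact div_nonneg hc₀ (by linarith)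
  | k + 1 => by
    have hr_k : |r k| ≤ 1 / (1 - c) :=
      calc |r k| ≤ |r k + 1| + 1 := by simpa [add_comm] using abs_sub_le (r k) (r k + 1) 0
        _ ≤ c / (1 - c) + 1 := by linarith [abs_add_one_le_of_abs_succ_add_one_le_s10 hc₀ hc₁ h₀ hr k]
        _ = 1 / (1 - c) := by field_simp [(sub_pos.mpr hc₁).ne']; ring
    calc |r (k + 1) + 1| ≤ c * |r k| := hr k
      _ ≤ c * (1 / (1 - c)) := by gcongr
      _ = c / (1 - c) := by ring

/-- Sufficient descent of the preconditioned Fletcher–Reeves directions (Al-Baali): the ratio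
`r k = g kᵀ p k / g kᵀ P g k` starts at `-1` and satisfies `|r (k+1) + 1| ≤ c |r k|`. -/
lemma fletcherReeves_sufficient_descent {ι : Type*} [Fintype ι] {P : Matrix ι ι ℝ}
    {g p : ℕ → ι → ℝ} {c : ℝ} (hc₀ : 0 ≤ c) (hc₁ : c < 1) (hG : ∀ k, 0 < g k ⬝ᵥ P *ᵥ g k)
    (hp₀ : p 0 = -(P *ᵥ g 0))
    (hp : ∀ k, p (k + 1) = -(P *ᵥ g (k + 1)) +
      ((g (k + 1) ⬝ᵥ P *ᵥ g (k + 1)) / (g k ⬝ᵥ P *ᵥ g k)) • p k)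
    (hcurv : ∀ k, |g (k + 1) ⬝ᵥ p k| ≤ c * |g k ⬝ᵥ p k|) (k : ℕ) :
    (1 - 2 * c) / (1 - c) * (g k ⬝ᵥ P *ᵥ g k) ≤ -(g k ⬝ᵥ p k) := by
  have hr₀ : (g 0 ⬝ᵥ p 0) / (g 0 ⬝ᵥ P *ᵥ g 0) = -1 := by
    rw [hp₀, dotProduct_neg, neg_div, div_self (hG 0).ne']
  have hr : ∀ k, |(g (k + 1) ⬝ᵥ p (k + 1)) / (g (k + 1) ⬝ᵥ P *ᵥ g (k + 1)) + 1| ≤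
      c * |(g k ⬝ᵥ p k) / (g k ⬝ᵥ P *ᵥ g k)| := by
    intro k
    have hrec : (g (k + 1) ⬝ᵥ p (k + 1)) / (g (k + 1) ⬝ᵥ P *ᵥ g (k + 1)) + 1 =
        (g (k + 1) ⬝ᵥ p k) / (g k ⬝ᵥ P *ᵥ g k) := by
      rw [hp k, dotProduct_add, dotProduct_neg, dotProduct_smul, smul_eq_mul]
      field_simp [(hG k).ne', (hG (k + 1)).ne']
      ring
    rw [hrec, abs_div, abs_div, abs_of_pos (hG k), mul_div_assoc']
    exact div_le_div_of_nonneg_right (hcurv k) (hG k).le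
  have hbound := abs_add_one_le_of_abs_succ_add_one_le_s10 hc₀ hc₁
    (r := fun k => (g k ⬝ᵥ p k) / (g k ⬝ᵥ P *ᵥ g k)) hr₀ hr k
  have hratio : (g k ⬝ᵥ p k) / (g k ⬝ᵥ P *ᵥ g k) ≤ -((1 - 2 * c) / (1 - c)) := by
    have : c / (1 - c) - 1 = -((1 - 2 * c) / (1 - c)) := by
      field_simp [(sub_pos.mpr hc₁).ne']; ring
    linarith [(abs_le.mp hbound).2]
  rw [div_le_iff₀ (hG k)] at hratio
  linarith

lemma one_sub_mul_neg_dotProduct_le {ι : Type*} [Fintype ι] {g g' p : ι → ℝ} {α c C : ℝ}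
    (hα : 0 ≤ α) (hLip : ‖g' - g‖ ≤ C * ‖α • p‖) (hcurv : c * (g ⬝ᵥ p) ≤ g' ⬝ᵥ p) :
    (1 - c) * -(g ⬝ᵥ p) ≤ Fintype.card ι * C * α * ‖p‖ ^ 2 :=
  calc (1 - c) * -(g ⬝ᵥ p) ≤ (g' - g) ⬝ᵥ p := by rw [sub_dotProduct]; linarith
    _ ≤ Fintype.card ι * (‖g' - g‖ * ‖p‖) := dotProduct_le_card_mul_norm_mul_norm _ _
    _ ≤ Fintype.card ι * (C * ‖α • p‖ * ‖p‖) := by gcongr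
    _ = Fintype.card ι * C * α * ‖p‖ ^ 2 := by rw [norm_smul, Real.norm_of_nonneg hα]; ring

lemma sq_div_le_inv_mul_sq_div {G D Q q σ μ : ℝ} (hσ : 0 < σ) (hG : 0 ≤ G) (hGD : σ * G ≤ -D)
    (hμ : 0 < μ) (hq : 0 < q) (hQ : μ * q ≤ Q) :
    G ^ 2 / Q ≤ (σ ^ 2 * μ)⁻¹ * (D ^ 2 / q) :=
  calc G ^ 2 / Q ≤ G ^ 2 / (μ * q) := by gcongr
    _ = (σ * G) ^ 2 / (σ ^ 2 * μ * q) := by field_simp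
    _ ≤ (-D) ^ 2 / (σ ^ 2 * μ * q) := by gcongr
    _ = (σ ^ 2 * μ)⁻¹ * (D ^ 2 / q) := by field_simp

theorem pcg_grad_fourth_power_summable_general
    (n : ℕ)
    (E : (Fin n → ℝ) → ℝ) (gradE : (Fin n → ℝ) → (Fin n → ℝ))
    (B : ℝ) (hbdd : ∀ x, B ≤ E x)
    (C : ℝ) (hC : 0 < C)
    (hLip : ∀ x y, ‖gradE y - gradE x‖ ≤ C * ‖y - x‖)
    (M : Matrix (Fin n) (Fin n) ℝ) (hM : M.PosDef)
    (f p : ℕ → (Fin n → ℝ)) (α : ℕ → ℝ)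
    (c₁ c₂ : ℝ) (hc₁ : 0 < c₁) (hc₁₂ : c₁ < c₂) (hc₂ : c₂ < 1 / 2)
    (hgne : ∀ k, gradE (f k) ≠ 0)
    (hα : ∀ k, 0 < α k)
    (hp0 : p 0 = -(M⁻¹.mulVec (gradE (f 0))))
    (hf : ∀ k, f (k + 1) = f k + α k • p k)
    (hpk : ∀ k, p (k + 1) =
      -(M⁻¹.mulVec (gradE (f (k + 1)))) +
        ((gradE (f (k + 1)) ⬝ᵥ M⁻¹.mulVec (gradE (f (k + 1)))) /
          (gradE (f k) ⬝ᵥ M⁻¹.mulVec (gradE (f k)))) • p k)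
    (hWolfe1 : ∀ k, E (f k + α k • p k) ≤ E (f k) + c₁ * α k * (gradE (f k) ⬝ᵥ p k))
    (hWolfe2 : ∀ k, |gradE (f k + α k • p k) ⬝ᵥ p k| ≤ c₂ * |gradE (f k) ⬝ᵥ p k|) :
    Summable (fun k : ℕ =>
      (gradE (f k) ⬝ᵥ M⁻¹.mulVec (gradE (f k))) ^ 2 / (p k ⬝ᵥ M.mulVec (p k))) := by
  have hG : ∀ k, 0 < gradE (f k) ⬝ᵥ M⁻¹ *ᵥ gradE (f k) := fun k => by
    simpa using hM.inv.dotProduct_mulVec_pos (hgne k)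
  have hcurv : ∀ k, |gradE (f (k + 1)) ⬝ᵥ p k| ≤ c₂ * |gradE (f k) ⬝ᵥ p k| := fun k => by
    rw [hf k]; exact hWolfe2 k
  have hσ : 0 < (1 - 2 * c₂) / (1 - c₂) := div_pos (by linarith) (by linarith)
  have hdescent :=
    fletcherReeves_sufficient_descent (hc₁.trans hc₁₂).le (by linarith) hG hp0 hpk hcurv
  have hD : ∀ k, gradE (f k) ⬝ᵥ p k < 0 := fun k => by nlinarith [hdescent k, hG k]
  have hp : ∀ k, p k ≠ 0 := fun k h => (hD k).ne (by simp [h])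
  have hzoutendijk : Summable fun k => (gradE (f k) ⬝ᵥ p k) ^ 2 / ‖p k‖ ^ 2 := by
    refine summable_sq_div_of_armijo (e := fun k => E (f k)) (α := α) (c₂ := c₂) (L := n * C) hc₁
      (by linarith) (by positivity) (fun k => hbdd _) (fun k => (hD k).le)
      (fun k => pow_pos (norm_pos_iff.mpr (hp k)) 2) (fun k => by rw [hf k]; exact hWolfe1 k)
      (fun k => ?_)
    have hcurv_lower : c₂ * (gradE (f k) ⬝ᵥ p k) ≤ gradE (f (k + 1)) ⬝ᵥ p k := by
      have h := hcurv k
      rw [abs_of_neg (hD k)] at h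
      linarith [neg_abs_le (gradE (f (k + 1)) ⬝ᵥ p k)]
    simpa using one_sub_mul_neg_dotProduct_le (hα k).le
      (by simpa [hf k] using hLip (f k) (f (k + 1))) hcurv_lower
  obtain ⟨μ, hμ, hMμ⟩ := hM.exists_pos_mul_sq_norm_le
  refine (hzoutendijk.mul_left _).of_nonneg_of_le
    (fun k => div_nonneg (sq_nonneg _) (by simpa using (hM.dotProduct_mulVec_pos (hp k)).le))
    (fun k => sq_div_le_inv_mul_sq_div hσ (hG k).le (hdescent k) hμ
      (pow_pos (norm_pos_iff.mpr (hp k)) 2) (hMμ (p k)))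

/-- The summability claim (eq:3) in the proof of Theorem 5.6: for the
preconditioned Fletcher–Reeves nonlinear CG iteration with `E` bounded below,
`∇E` Lipschitz, and strong Wolfe step lengths with `0 < c₁ < c₂ < 1/2`,
`∑ₖ ‖g⁽ᵏ⁾‖⁴_{M⁻¹}/‖p⁽ᵏ⁾‖²_M < ∞`. -/
theorem pcg_grad_fourth_power_summable
    (n : ℕ) (hn : 1 ≤ n)
    (E : (Fin n → ℝ) → ℝ) (gradE : (Fin n → ℝ) → (Fin n → ℝ))
    (hdiff : Differentiable ℝ E)
    (hgrad : ∀ x v, fderiv ℝ E x v = gradE x ⬝ᵥ v)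
    (B : ℝ) (hbdd : ∀ x, B ≤ E x)
    (C : ℝ) (hC : 0 < C)
    (hLip : ∀ x y, ‖gradE y - gradE x‖ ≤ C * ‖y - x‖)
    (M : Matrix (Fin n) (Fin n) ℝ) (hM : M.PosDef)
    (f p : ℕ → (Fin n → ℝ)) (α : ℕ → ℝ)
    (c₁ c₂ : ℝ) (hc₁ : 0 < c₁) (hc₁₂ : c₁ < c₂) (hc₂ : c₂ < 1 / 2)
    (hgne : ∀ k, gradE (f k) ≠ 0)
    (hα : ∀ k, 0 < α k)
    (hp0 : p 0 = -(M⁻¹.mulVec (gradE (f 0))))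
    (hf : ∀ k, f (k + 1) = f k + α k • p k)
    (hpk : ∀ k, p (k + 1) =
      -(M⁻¹.mulVec (gradE (f (k + 1)))) +
        ((gradE (f (k + 1)) ⬝ᵥ M⁻¹.mulVec (gradE (f (k + 1)))) /
          (gradE (f k) ⬝ᵥ M⁻¹.mulVec (gradE (f k)))) • p k)
    (hWolfe1 : ∀ k, E (f k + α k • p k) ≤ E (f k) + c₁ * α k * (gradE (f k) ⬝ᵥ p k))
    (hWolfe2 : ∀ k, |gradE (f k + α k • p k) ⬝ᵥ p k| ≤ c₂ * |gradE (f k) ⬝ᵥ p k|) :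
    Summable (fun k : ℕ =>
      (gradE (f k) ⬝ᵥ M⁻¹.mulVec (gradE (f k))) ^ 2 / (p k ⬝ᵥ M.mulVec (p k))) :=
  pcg_grad_fourth_power_summable_general n E gradE B hbdd C hC hLip M hM f p α c₁ c₂ hc₁ hc₁₂ hc₂
    hgne hα hp0 hf hpk hWolfe1 hWolfe2
end

section
/- Consider the preconditioned Fletcher–Reeves nonlinear CG iteration for a differentiable E : ℝⁿ → ℝ with symmetric positive definite preconditioner M, with nonzero gradients g^(k) = ∇E(f^(k)) at every iterate, and suppose every step length α_k satisfies the strong Wolfe conditions with constants 0 < c₁ < c₂ < 1/2. Then for all k ≥ 0, ‖p^(k)‖²_M ≤ ((1 + c₂)/(1 − c₂)) · ‖g^(k)‖⁴_{M⁻¹} · Σ_{i=0}^{k} 1/‖g^(i)‖²_{M⁻¹}. -/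
/-!
Write `γₖ = ‖g⁽ᵏ⁾‖²_{M⁻¹}` and `βₖ₊₁ = γₖ₊₁ / γₖ`. Expanding `p⁽ᵏ⁺¹⁾ = -M⁻¹g⁽ᵏ⁺¹⁾ + βₖ₊₁ p⁽ᵏ⁾` gives
`g⁽ᵏ⁺¹⁾ᵀp⁽ᵏ⁺¹⁾ = -γₖ₊₁ + βₖ₊₁ g⁽ᵏ⁺¹⁾ᵀp⁽ᵏ⁾`, and the curvature condition turns this into the bound
`|g⁽ᵏ⁾ᵀp⁽ᵏ⁾| ≤ γₖ / (1 - c₂)` (Lemma 5.3). Expanding the `M`-norm the same way,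
`‖p⁽ᵏ⁺¹⁾‖²_M = γₖ₊₁ - 2βₖ₊₁ g⁽ᵏ⁺¹⁾ᵀp⁽ᵏ⁾ + βₖ₊₁² ‖p⁽ᵏ⁾‖²_M`, and bounding the cross term by
Lemma 5.3 and the curvature condition again, the normalized quantity `‖p⁽ᵏ⁾‖²_M / γₖ²` grows by
at most `((1 + c₂) / (1 - c₂)) / γₖ₊₁` per step, which telescopes to the claim.
-/

open Matrix

variable {ι : Type*} [Fintype ι] [DecidableEq ι]

section SymmetricForm

variable {M : Matrix ι ι ℝ}

theorem Matrix.dotProduct_mulVec_inv_mulVec (hM : IsUnit M.det) (x y : ι → ℝ) :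
    x ⬝ᵥ M *ᵥ (M⁻¹ *ᵥ y) = x ⬝ᵥ y := by
  rw [mulVec_mulVec, mul_nonsing_inv M hM, one_mulVec]

theorem Matrix.IsSymm.inv_mulVec_dotProduct_mulVec (hMs : M.IsSymm) (hM : IsUnit M.det)
    (x y : ι → ℝ) : (M⁻¹ *ᵥ x) ⬝ᵥ M *ᵥ y = x ⬝ᵥ y := by
  rw [← hMs.inv.eq, mulVec_transpose, ← dotProduct_mulVec, mulVec_mulVec,
    nonsing_inv_mul M hM, one_mulVec]

theorem Matrix.IsSymm.dotProduct_mulVec_neg_inv_mulVec_add_smul (hMs : M.IsSymm)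
    (hM : IsUnit M.det) (g p : ι → ℝ) (β : ℝ) :
    (-(M⁻¹ *ᵥ g) + β • p) ⬝ᵥ M *ᵥ (-(M⁻¹ *ᵥ g) + β • p) =
      g ⬝ᵥ M⁻¹ *ᵥ g - 2 * β * (g ⬝ᵥ p) + β ^ 2 * (p ⬝ᵥ M *ᵥ p) := by
  simp only [mulVec_add, mulVec_neg, mulVec_smul, add_dotProduct, dotProduct_add,
    neg_dotProduct, dotProduct_neg, smul_dotProduct, dotProduct_smul, smul_eq_mul,
    hMs.inv_mulVec_dotProduct_mulVec hM, dotProduct_mulVec_inv_mulVec hM, dotProduct_comm p g]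
  rw [dotProduct_comm (M⁻¹ *ᵥ g)]
  ring

end SymmetricForm

structure IsFletcherReevesDirections (M : Matrix ι ι ℝ) (g p : ℕ → ι → ℝ) : Prop where
  zero : p 0 = -(M⁻¹ *ᵥ g 0)
  succ : ∀ k, p (k + 1) = -(M⁻¹ *ᵥ g (k + 1)) +
    ((g (k + 1) ⬝ᵥ M⁻¹ *ᵥ g (k + 1)) / (g k ⬝ᵥ M⁻¹ *ᵥ g k)) • p k

namespace IsFletcherReevesDirections

variable {M : Matrix ι ι ℝ} {g p : ℕ → ι → ℝ} {c : ℝ}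

theorem dotProduct_direction_zero (hp : IsFletcherReevesDirections M g p) :
    g 0 ⬝ᵥ p 0 = -(g 0 ⬝ᵥ M⁻¹ *ᵥ g 0) := by
  rw [hp.zero, dotProduct_neg]

theorem dotProduct_direction_succ (hp : IsFletcherReevesDirections M g p) (k : ℕ) :
    g (k + 1) ⬝ᵥ p (k + 1) = -(g (k + 1) ⬝ᵥ M⁻¹ *ᵥ g (k + 1)) +
      (g (k + 1) ⬝ᵥ M⁻¹ *ᵥ g (k + 1)) / (g k ⬝ᵥ M⁻¹ *ᵥ g k) * (g (k + 1) ⬝ᵥ p k) := by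
  rw [hp.succ k, dotProduct_add, dotProduct_neg, dotProduct_smul, smul_eq_mul]

theorem abs_dotProduct_direction_le (hp : IsFletcherReevesDirections M g p)
    (hγ : ∀ k, 0 < g k ⬝ᵥ M⁻¹ *ᵥ g k) (hc₀ : 0 ≤ c) (hc₁ : c < 1)
    (hcurv : ∀ k, |g (k + 1) ⬝ᵥ p k| ≤ c * |g k ⬝ᵥ p k|) (k : ℕ) :
    |g k ⬝ᵥ p k| ≤ (g k ⬝ᵥ M⁻¹ *ᵥ g k) / (1 - c) := by
  induction k with
  | zero =>
    rw [hp.dotProduct_direction_zero, abs_neg, abs_of_pos (hγ 0)]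
    exact le_div_self (hγ 0).le (by linarith) (by linarith)
  | succ k ih =>
    set γ := fun k => g k ⬝ᵥ M⁻¹ *ᵥ g k
    have hβ : 0 < γ (k + 1) / γ k := div_pos (hγ (k + 1)) (hγ k)
    calc |g (k + 1) ⬝ᵥ p (k + 1)|
        = |-γ (k + 1) + γ (k + 1) / γ k * (g (k + 1) ⬝ᵥ p k)| := by
          rw [hp.dotProduct_direction_succ k]
      _ ≤ γ (k + 1) + γ (k + 1) / γ k * |g (k + 1) ⬝ᵥ p k| := by
        grw [abs_add_le, abs_neg, abs_mul, abs_of_pos (hγ (k + 1)), abs_of_pos hβ]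
      _ ≤ γ (k + 1) + γ (k + 1) / γ k * (c * (γ k / (1 - c))) := by
        grw [hcurv k, ih]
      _ = γ (k + 1) / (1 - c) := by
        have hγk : γ k ≠ 0 := (hγ k).ne'
        field_simp [hγk, (show (1 - c) ≠ 0 by linarith)]
        ring

theorem dotProduct_mulVec_direction_zero (hp : IsFletcherReevesDirections M g p)
    (hM : IsUnit M.det) :
    p 0 ⬝ᵥ M *ᵥ p 0 = g 0 ⬝ᵥ M⁻¹ *ᵥ g 0 := by
  rw [hp.zero, mulVec_neg, neg_dotProduct, dotProduct_neg, neg_neg,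
    dotProduct_mulVec_inv_mulVec hM, dotProduct_comm]

theorem dotProduct_mulVec_direction_succ_div_le (hp : IsFletcherReevesDirections M g p)
    (hMs : M.IsSymm) (hM : IsUnit M.det) (hγ : ∀ k, 0 < g k ⬝ᵥ M⁻¹ *ᵥ g k)
    (hc₀ : 0 ≤ c) (hc₁ : c < 1) (hcurv : ∀ k, |g (k + 1) ⬝ᵥ p k| ≤ c * |g k ⬝ᵥ p k|) (k : ℕ) :
    p (k + 1) ⬝ᵥ M *ᵥ p (k + 1) / (g (k + 1) ⬝ᵥ M⁻¹ *ᵥ g (k + 1)) ^ 2 ≤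
      p k ⬝ᵥ M *ᵥ p k / (g k ⬝ᵥ M⁻¹ *ᵥ g k) ^ 2 +
        (1 + c) / (1 - c) / (g (k + 1) ⬝ᵥ M⁻¹ *ᵥ g (k + 1)) := by
  set γ := fun k => g k ⬝ᵥ M⁻¹ *ᵥ g k
  set β := γ (k + 1) / γ k
  have hγk : γ k ≠ 0 := (hγ k).ne'
  have hγk' : γ (k + 1) ≠ 0 := (hγ (k + 1)).ne'
  have hc : 1 - c ≠ 0 := by linarith
  have hnorm : p (k + 1) ⬝ᵥ M *ᵥ p (k + 1) =
      γ (k + 1) - 2 * β * (g (k + 1) ⬝ᵥ p k) + β ^ 2 * (p k ⬝ᵥ M *ᵥ p k) := by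
    rw [hp.succ k]
    exact hMs.dotProduct_mulVec_neg_inv_mulVec_add_smul hM _ _ _
  have hcross : -(g (k + 1) ⬝ᵥ p k) ≤ c * (γ k / (1 - c)) := by
    grw [neg_le_abs, hcurv k, hp.abs_dotProduct_direction_le hγ hc₀ hc₁ hcurv k]
  have hβ : 0 ≤ β := (div_pos (hγ (k + 1)) (hγ k)).le
  have hsplit : (1 + c) / (1 - c) * γ (k + 1) = γ (k + 1) + 2 * β * (c * (γ k / (1 - c))) := by
    simp only [β]
    field_simp
    ring
  have hrhs : (p k ⬝ᵥ M *ᵥ p k / γ k ^ 2 + (1 + c) / (1 - c) / γ (k + 1)) * γ (k + 1) ^ 2 =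
      β ^ 2 * (p k ⬝ᵥ M *ᵥ p k) + (1 + c) / (1 - c) * γ (k + 1) := by
    simp only [β]
    field_simp
  rw [div_le_iff₀ (pow_pos (hγ (k + 1)) 2), hrhs, hnorm, hsplit]
  linarith [mul_le_mul_of_nonneg_left hcross hβ]

theorem dotProduct_mulVec_direction_le (hp : IsFletcherReevesDirections M g p) (hMs : M.IsSymm)
    (hM : IsUnit M.det) (hγ : ∀ k, 0 < g k ⬝ᵥ M⁻¹ *ᵥ g k) (hc₀ : 0 ≤ c) (hc₁ : c < 1)
    (hcurv : ∀ k, |g (k + 1) ⬝ᵥ p k| ≤ c * |g k ⬝ᵥ p k|) (k : ℕ) :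
    p k ⬝ᵥ M *ᵥ p k ≤ (1 + c) / (1 - c) * (g k ⬝ᵥ M⁻¹ *ᵥ g k) ^ 2 *
      ∑ i ∈ Finset.range (k + 1), 1 / (g i ⬝ᵥ M⁻¹ *ᵥ g i) := by
  have hC : 1 ≤ (1 + c) / (1 - c) := by rw [le_div_iff₀ (by linarith)]; linarith
  have hnormalized : p k ⬝ᵥ M *ᵥ p k / (g k ⬝ᵥ M⁻¹ *ᵥ g k) ^ 2 ≤
      (1 + c) / (1 - c) * ∑ i ∈ Finset.range (k + 1), 1 / (g i ⬝ᵥ M⁻¹ *ᵥ g i) := by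
    induction k with
    | zero =>
      rw [hp.dotProduct_mulVec_direction_zero hM, Finset.sum_range_one, sq,
        div_mul_cancel_left₀ (hγ 0).ne', ← one_div]
      exact le_mul_of_one_le_left (one_div_pos.mpr (hγ 0)).le hC
    | succ k ih =>
      grw [hp.dotProduct_mulVec_direction_succ_div_le hMs hM hγ hc₀ hc₁ hcurv k, ih,
        Finset.sum_range_succ _ (k + 1), mul_add, mul_one_div]
  rw [div_le_iff₀ (pow_pos (hγ k) 2)] at hnormalized
  exact hnormalized.trans_eq (by ring)

end IsFletcherReevesDirections

theorem pcg_direction_norm_bound_general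
    (n : ℕ)
    (gradE : (Fin n → ℝ) → (Fin n → ℝ))
    (M : Matrix (Fin n) (Fin n) ℝ) (hM : M.PosDef)
    (f p : ℕ → (Fin n → ℝ)) (α : ℕ → ℝ)
    (c₁ c₂ : ℝ) (hc₁ : 0 < c₁) (hc₁₂ : c₁ < c₂) (hc₂ : c₂ < 1 / 2)
    (hgne : ∀ k, gradE (f k) ≠ 0)
    (hp0 : p 0 = -(M⁻¹.mulVec (gradE (f 0))))
    (hf : ∀ k, f (k + 1) = f k + α k • p k)
    (hpk : ∀ k, p (k + 1) =
      -(M⁻¹.mulVec (gradE (f (k + 1)))) +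
        ((gradE (f (k + 1)) ⬝ᵥ M⁻¹.mulVec (gradE (f (k + 1)))) /
          (gradE (f k) ⬝ᵥ M⁻¹.mulVec (gradE (f k)))) • p k)
    (hWolfe2 : ∀ k, |gradE (f k + α k • p k) ⬝ᵥ p k| ≤ c₂ * |gradE (f k) ⬝ᵥ p k|) :
    ∀ k, p k ⬝ᵥ M.mulVec (p k) ≤
      ((1 + c₂) / (1 - c₂)) * (gradE (f k) ⬝ᵥ M⁻¹.mulVec (gradE (f k))) ^ 2 *
        ∑ i ∈ Finset.range (k + 1), 1 / (gradE (f i) ⬝ᵥ M⁻¹.mulVec (gradE (f i))) := by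
  have hFR : IsFletcherReevesDirections M (fun k => gradE (f k)) p := ⟨hp0, hpk⟩
  have hγ (k : ℕ) : 0 < gradE (f k) ⬝ᵥ M⁻¹ *ᵥ gradE (f k) := by
    simpa using hM.inv.dotProduct_mulVec_pos (hgne k)
  have hcurv (k : ℕ) : |gradE (f (k + 1)) ⬝ᵥ p k| ≤ c₂ * |gradE (f k) ⬝ᵥ p k| :=
    hf k ▸ hWolfe2 k
  exact hFR.dotProduct_mulVec_direction_le (isHermitian_iff_isSymm.mp hM.1)
    ((isUnit_iff_isUnit_det M).mp hM.isUnit) hγ (by linarith) (by linarith) hcurv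

/-- The bound (4.31) on the M-norm of the Fletcher–Reeves search direction in
the proof of Theorem 5.6:
`‖p⁽ᵏ⁾‖²_M ≤ ((1+c₂)/(1−c₂))·‖g⁽ᵏ⁾‖⁴_{M⁻¹}·∑_{i=0}^{k} 1/‖g⁽ⁱ⁾‖²_{M⁻¹}`. -/
theorem pcg_direction_norm_bound
    (n : ℕ) (hn : 1 ≤ n)
    (E : (Fin n → ℝ) → ℝ) (gradE : (Fin n → ℝ) → (Fin n → ℝ))
    (hdiff : Differentiable ℝ E)
    (hgrad : ∀ x v, fderiv ℝ E x v = gradE x ⬝ᵥ v)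
    (M : Matrix (Fin n) (Fin n) ℝ) (hM : M.PosDef)
    (f p : ℕ → (Fin n → ℝ)) (α : ℕ → ℝ)
    (c₁ c₂ : ℝ) (hc₁ : 0 < c₁) (hc₁₂ : c₁ < c₂) (hc₂ : c₂ < 1 / 2)
    (hgne : ∀ k, gradE (f k) ≠ 0)
    (hα : ∀ k, 0 < α k)
    (hp0 : p 0 = -(M⁻¹.mulVec (gradE (f 0))))
    (hf : ∀ k, f (k + 1) = f k + α k • p k)
    (hpk : ∀ k, p (k + 1) =
      -(M⁻¹.mulVec (gradE (f (k + 1)))) +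
        ((gradE (f (k + 1)) ⬝ᵥ M⁻¹.mulVec (gradE (f (k + 1)))) /
          (gradE (f k) ⬝ᵥ M⁻¹.mulVec (gradE (f k)))) • p k)
    (hWolfe1 : ∀ k, E (f k + α k • p k) ≤ E (f k) + c₁ * α k * (gradE (f k) ⬝ᵥ p k))
    (hWolfe2 : ∀ k, |gradE (f k + α k • p k) ⬝ᵥ p k| ≤ c₂ * |gradE (f k) ⬝ᵥ p k|) :
    ∀ k, p k ⬝ᵥ M.mulVec (p k) ≤
      ((1 + c₂) / (1 - c₂)) * (gradE (f k) ⬝ᵥ M⁻¹.mulVec (gradE (f k))) ^ 2 *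
        ∑ i ∈ Finset.range (k + 1), 1 / (gradE (f i) ⬝ᵥ M⁻¹.mulVec (gradE (f i))) :=
  pcg_direction_norm_bound_general n gradE M hM f p α c₁ c₂ hc₁ hc₁₂ hc₂ hgne hp0 hf hpk hWolfe2
end
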